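/- Let f be continuous on ℝ, f ≥ 0 on (0,∞), F(s) = ∫₀^s f, and let u : ℝᴺ → (0,∞). Let H be a closed half-space. If F(u)^H = F(u) everywhere (i.e., polarization leaves F∘u unchanged), then f(u^H) = f(u) everywhere on ℝᴺ. -/

import Mathlib

open Set intervalIntegral

/-! Wherever polarization changes the value of `u`, it swaps `u x` with `u (σH x)` in the
direction that would strictly move `F ∘ u`, unless `F` is constant between the two values.
Since `f ≥ 0` is continuous, `F` can only be constant on an interval where `f` vanishes, so `f`
takes the same value (zero) at both endpoints. -/

theorem eqOn_zero_of_integral_nonpos {f : ℝ → ℝ} {a b : ℝ} (hab : a < b)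
    (hfc : ContinuousOn f (Icc a b)) (hf : ∀ x ∈ Icc a b, 0 ≤ f x)
    (hint : ∫ x in a..b, f x ≤ 0) : EqOn f 0 (Icc a b) := by
  intro x hx
  refine le_antisymm (not_lt.1 fun hpos => hint.not_gt ?_) (hf x hx)
  simpa using integral_lt_integral_of_continuousOn_of_le_of_exists_lt hab continuousOn_const
    hfc (fun y hy => hf y (Ioc_subset_Icc_self hy)) ⟨x, hx, hpos⟩

theorem apply_eq_of_integral_le {f : ℝ → ℝ} {a b : ℝ} (hfc : Continuous f)
    (hf : ∀ x ∈ Icc a b, 0 ≤ f x) (hab : a ≤ b)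
    (hint : ∫ x in (0 : ℝ)..b, f x ≤ ∫ x in (0 : ℝ)..a, f x) : f b = f a := by
  rcases hab.eq_or_lt with rfl | hlt
  · rfl
  have hsub : ∫ x in a..b, f x ≤ 0 := by
    rw [← integral_interval_sub_left (hfc.intervalIntegrable 0 b) (hfc.intervalIntegrable 0 a)]
    linarith
  have hzero := eqOn_zero_of_integral_nonpos hlt hfc.continuousOn hf hsub
  exact (hzero (right_mem_Icc.2 hab)).trans (hzero (left_mem_Icc.2 hab)).symm

section PositiveHalfLine

variable {f : ℝ → ℝ} (hfc : Continuous f) (hf : ∀ s, 0 < s → 0 ≤ f s) {a b : ℝ}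
include hfc hf

theorem apply_max_eq_of_max_integral_eq (ha : 0 < a)
    (h : max (∫ x in (0 : ℝ)..a, f x) (∫ x in (0 : ℝ)..b, f x) = ∫ x in (0 : ℝ)..a, f x) :
    f (max a b) = f a := by
  rcases le_total b a with hba | hab
  · rw [max_eq_left hba]
  · rw [max_eq_right hab]
    exact apply_eq_of_integral_le hfc (fun s hs => hf s (ha.trans_le hs.1)) hab
      (max_eq_left_iff.1 h)

theorem apply_min_eq_of_min_integral_eq (hb : 0 < b)
    (h : min (∫ x in (0 : ℝ)..a, f x) (∫ x in (0 : ℝ)..b, f x) = ∫ x in (0 : ℝ)..a, f x) :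
    f (min a b) = f a := by
  rcases le_total a b with hab | hba
  · rw [min_eq_left hab]
  · rw [min_eq_right hba]
    exact (apply_eq_of_integral_le hfc (fun s hs => hf s (hb.trans_le hs.1)) hba
      (min_eq_left_iff.1 h)).symm

end PositiveHalfLine

theorem stmt16_general (N : ℕ)
    (f : ℝ → ℝ) (hfc : Continuous f) (hf : ∀ s : ℝ, 0 < s → 0 ≤ f s)
    (F : ℝ → ℝ) (hF : ∀ s : ℝ, F s = ∫ σ in (0 : ℝ)..s, f σ)
    (u : EuclideanSpace ℝ (Fin N) → ℝ) (hu : ∀ x, 0 < u x)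
    -- the closed half-space `H = {x : ⟪x, e⟫ ≤ c}` and the reflection `σ` across `∂H`
    (e : EuclideanSpace ℝ (Fin N)) (c : ℝ)
    (σH : EuclideanSpace ℝ (Fin N) → EuclideanSpace ℝ (Fin N))
    (uH : EuclideanSpace ℝ (Fin N) → ℝ)
    (huH : ∀ x, uH x =
      if (inner ℝ x e : ℝ) ≤ c then max (u x) (u (σH x)) else min (u x) (u (σH x)))
    -- hypothesis: the polarization of `F ∘ u` coincides with `F ∘ u`
    (hfix : ∀ x, (if (inner ℝ x e : ℝ) ≤ c then max (F (u x)) (F (u (σH x)))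
        else min (F (u x)) (F (u (σH x)))) = F (u x)) :
    ∀ x, f (uH x) = f (u x) := by
  intro x
  have hx := hfix x
  simp only [hF] at hx
  rw [huH x]
  split_ifs at hx ⊢
  · exact apply_max_eq_of_max_integral_eq hfc hf (hu x) hx
  · exact apply_min_eq_of_min_integral_eq hfc hf (hu (σH x)) hx

/-- if polarization leaves `F ∘ u` unchanged, then `f (u^H) = f (u)`. -/
theorem stmt16 (N : ℕ) (hN : 1 ≤ N)
    (f : ℝ → ℝ) (hfc : Continuous f) (hf : ∀ s : ℝ, 0 < s → 0 ≤ f s)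
    (F : ℝ → ℝ) (hF : ∀ s : ℝ, F s = ∫ σ in (0 : ℝ)..s, f σ)
    (u : EuclideanSpace ℝ (Fin N) → ℝ) (hu : ∀ x, 0 < u x)
    -- the closed half-space `H = {x : ⟪x, e⟫ ≤ c}` and the reflection `σ` across `∂H`
    (e : EuclideanSpace ℝ (Fin N)) (he : ‖e‖ = 1) (c : ℝ)
    (σH : EuclideanSpace ℝ (Fin N) → EuclideanSpace ℝ (Fin N))
    (hσ : ∀ x, σH x = x + (2 * (c - (inner ℝ x e : ℝ))) • e)
    (uH : EuclideanSpace ℝ (Fin N) → ℝ)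
    (huH : ∀ x, uH x =
      if (inner ℝ x e : ℝ) ≤ c then max (u x) (u (σH x)) else min (u x) (u (σH x)))
    -- hypothesis: the polarization of `F ∘ u` coincides with `F ∘ u`
    (hfix : ∀ x, (if (inner ℝ x e : ℝ) ≤ c then max (F (u x)) (F (u (σH x)))
        else min (F (u x)) (F (u (σH x)))) = F (u x)) :
    ∀ x, f (uH x) = f (u x) :=
  stmt16_general N f hfc hf F hF u hu e c σH uH huH hfix
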